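/- arXiv:2005.06277 — 2 statements merged into one kernel-verified Lean document; each statement's English description precedes it below -/
import Mathlib

section
/- Let {X_k : k = 0, 1, 2, …} be a martingale taking values in ℝ^d (with respect to some filtration), and suppose Pr{ ‖X_k − X_{k−1}‖ ≤ c_k } = 1 for every k ∈ ℕ, where c_k > 0. Then for every positive integer n and every ε > 0: Pr{ ‖Xₙ − X₀‖ ≥ ε } ≤ 2·exp( −2 ε² / (5 Σ_{k=1}^{n} c_k²) ). -/
/-!
Following Pinelis, control `E cosh (L ‖Xₙ - X₀‖)` instead of a moment generating function.
Since `s ↦ cosh √s` is convex on `[0, ∞)`, for `‖ξ‖ ≤ c` one has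
`cosh (L ‖y + ξ‖) ≤ cosh (L ‖y‖) cosh (L c) + ⟪v(y), ξ⟫` for an explicit vector `v(y)` parallel to
`y`. For a martingale increment `ξ` and an `ℱₖ`-measurable `y` the linear term has expectation
zero, so `E cosh (L ‖Xₙ - X₀‖) ≤ ∏ cosh (L cₖ) ≤ exp (L² S / 2)` with `S = ∑ cₖ²`. Markov's
inequality with `cosh (L ε) ≥ exp (L ε) / 2` and the choice `L = ε / S` give
`Pr{‖Xₙ - X₀‖ ≥ ε} ≤ 2 exp (-ε² / (2 S))`, which is stronger than the claimed bound.
-/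

open MeasureTheory ProbabilityTheory
open Real
open scoped RealInnerProductSpace

namespace Real

theorem sinh_le_mul_cosh {x : ℝ} (hx : 0 ≤ x) : sinh x ≤ x * cosh x := by
  have hmono : MonotoneOn (fun x => x * cosh x - sinh x) (Set.Ici 0) := by
    refine monotoneOn_of_hasDerivWithinAt_nonneg (f' := fun x => x * sinh x) (convex_Ici 0)
      (by fun_prop) (fun x _ => ?_) (fun x hx => ?_)
    · have h : HasDerivAt (fun x => x * cosh x - sinh x) (1 * cosh x + x * sinh x - cosh x) x :=
        ((hasDerivAt_id' x).mul (hasDerivAt_cosh x)).sub (hasDerivAt_sinh x)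
      exact (h.congr_deriv (by ring)).hasDerivWithinAt
    · rw [interior_Ici] at hx
      exact mul_nonneg hx.out.le (sinh_nonneg_iff.2 hx.out.le)
  simpa using hmono Set.self_mem_Ici hx hx

theorem convexOn_cosh_sqrt : ConvexOn ℝ (Set.Ici 0) (fun s => cosh √s) := by
  refine convexOn_of_hasDerivWithinAt2_nonneg (convex_Ici 0)
    (f' := fun s => sinh √s / (2 * √s))
    (f'' := fun s => (cosh √s - sinh √s / √s) / (4 * s)) (by fun_prop) (fun s hs => ?_)
    (fun s hs => ?_) (fun s hs => ?_) <;> rw [interior_Ici] at hs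
  · have h := (hasDerivAt_cosh √s).comp s (hasDerivAt_sqrt hs.out.ne')
    exact (h.congr_deriv (by ring)).hasDerivWithinAt
  · have hs0 : s ≠ 0 := hs.out.ne'
    have hs' : √s ≠ 0 := (sqrt_pos.2 hs.out).ne'
    have hsqrt := hasDerivAt_sqrt hs0
    have h := ((hasDerivAt_sinh √s).comp s hsqrt).div (hsqrt.const_mul 2)
      (mul_ne_zero two_ne_zero hs')
    refine (h.congr_deriv ?_).hasDerivWithinAt
    simp only [Function.comp_apply, mul_pow, sq_sqrt hs.out.le]
    field_simp
    ring
  · have hsqrt : 0 < √s := sqrt_pos.2 hs.out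
    have h : sinh √s / √s ≤ cosh √s := by
      rw [div_le_iff₀ hsqrt, mul_comm]; exact sinh_le_mul_cosh hsqrt.le
    exact div_nonneg (by linarith) (by linarith [hs.out])

theorem cosh_sqrt_le {w : ℝ} (hw : |w| ≤ 1) (a b : ℝ) :
    cosh √(a ^ 2 + b ^ 2 + 2 * w * a * b) ≤ cosh a * cosh b + w * sinh a * sinh b := by
  have ⟨hw₁, hw₂⟩ := abs_le.1 hw
  have h := convexOn_cosh_sqrt.2 (sq_nonneg (a - b)) (sq_nonneg (a + b))
    (by linarith : 0 ≤ (1 - w) / 2) (by linarith : 0 ≤ (1 + w) / 2) (by ring)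
  simp only [smul_eq_mul, sqrt_sq_eq_abs, cosh_abs, cosh_sub, cosh_add] at h
  rw [show a ^ 2 + b ^ 2 + 2 * w * a * b = (1 - w) / 2 * (a - b) ^ 2 + (1 + w) / 2 * (a + b) ^ 2
    by ring]
  exact h.trans_eq (by ring)

theorem prod_cosh_le_exp {ι : Type*} (s : Finset ι) (a : ι → ℝ) :
    ∏ i ∈ s, cosh (a i) ≤ exp ((∑ i ∈ s, a i ^ 2) / 2) := by
  rw [Finset.sum_div, exp_sum]
  exact Finset.prod_le_prod (fun i _ => (cosh_pos _).le) (fun i _ => cosh_le_exp_half_sq _)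

end Real

section InnerProductSpace

variable {F : Type*} [NormedAddCommGroup F] [InnerProductSpace ℝ F]

noncomputable def coshCorrection (L c : ℝ) (y : F) : F :=
  (sinh (L * ‖y‖) * sinh (L * c) / (‖y‖ * c)) • y

theorem cosh_mul_norm_add_le (L : ℝ) {c : ℝ} (y : F) {ξ : F} (hξ : ‖ξ‖ ≤ c) :
    cosh (L * ‖y + ξ‖) ≤ cosh (L * ‖y‖) * cosh (L * c) + ⟪coshCorrection L c y, ξ⟫ := by
  -- `w` is the weight exhibiting `‖y‖² + c² + 2 ⟪y, ξ⟫` as a convex combination of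
  -- `(‖y‖ - c)²` and `(‖y‖ + c)²`; if `‖y‖ * c = 0`, both `w` and `⟪y, ξ⟫` vanish.
  set w := ⟪y, ξ⟫ / (‖y‖ * c)
  have ht : |⟪y, ξ⟫| ≤ ‖y‖ * c :=
    (abs_real_inner_le_norm y ξ).trans (mul_le_mul_of_nonneg_left hξ (norm_nonneg y))
  have hw : |w| ≤ 1 := by
    rw [abs_div]
    exact div_le_one_of_le₀ (ht.trans (le_abs_self _)) (abs_nonneg _)
  have hwt : w * (‖y‖ * c) = ⟪y, ξ⟫ := by
    rcases eq_or_ne (‖y‖ * c) 0 with h | h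
    · rw [h, mul_zero, eq_comm, ← abs_nonpos_iff, ← h]
      exact ht
    · exact div_mul_cancel₀ _ h
  have hinner : ⟪coshCorrection L c y, ξ⟫ = w * sinh (L * ‖y‖) * sinh (L * c) := by
    simp only [coshCorrection, real_inner_smul_left, w]
    ring
  rw [hinner]
  refine (cosh_le_cosh.2 ?_).trans (cosh_sqrt_le hw _ _)
  rw [abs_of_nonneg (sqrt_nonneg _)]
  refine abs_le_sqrt ?_
  have hξ2 : ‖ξ‖ ^ 2 ≤ c ^ 2 := pow_le_pow_left₀ (norm_nonneg ξ) hξ 2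
  calc (L * ‖y + ξ‖) ^ 2 = L ^ 2 * (‖y‖ ^ 2 + 2 * ⟪y, ξ⟫ + ‖ξ‖ ^ 2) := by
        rw [mul_pow, norm_add_sq_real]
    _ ≤ L ^ 2 * (‖y‖ ^ 2 + 2 * ⟪y, ξ⟫ + c ^ 2) := by gcongr
    _ = (L * ‖y‖) ^ 2 + (L * c) ^ 2 + 2 * w * (L * ‖y‖) * (L * c) := by
        rw [← hwt]; ring

theorem norm_coshCorrection_le {L B : ℝ} (hL : 0 ≤ L) (c : ℝ) {y : F} (hy : ‖y‖ ≤ B) :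
    ‖coshCorrection L c y‖ ≤ sinh (L * B) * |sinh (L * c) / c| := by
  have hsinh : 0 ≤ sinh (L * ‖y‖) := sinh_nonneg_iff.2 (by positivity)
  rcases eq_or_ne ‖y‖ 0 with hy0 | hy0
  · simp only [coshCorrection, hy0, norm_smul, mul_zero]
    exact mul_nonneg (sinh_nonneg_iff.2 (mul_nonneg hL (hy0 ▸ hy))) (abs_nonneg _)
  calc ‖coshCorrection L c y‖ = sinh (L * ‖y‖) * |sinh (L * c) / c| := by
        rw [coshCorrection, norm_smul, norm_div, norm_mul, norm_mul, Real.norm_of_nonneg hsinh,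
          norm_norm, Real.norm_eq_abs, Real.norm_eq_abs, abs_div]
        field_simp
    _ ≤ sinh (L * B) * |sinh (L * c) / c| := by gcongr; exact sinh_le_sinh.2 (by gcongr)

theorem MeasureTheory.StronglyMeasurable.coshCorrection {Ω : Type*} {m : MeasurableSpace Ω}
    {Y : Ω → F} (hY : StronglyMeasurable Y) (L c : ℝ) :
    StronglyMeasurable (fun ω => coshCorrection L c (Y ω)) := by
  have hscalar : Measurable fun r : ℝ => sinh (L * r) * sinh (L * c) / (r * c) := by
    fun_prop
  exact ((hscalar.comp hY.norm.measurable).stronglyMeasurable).smul hY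

end InnerProductSpace

theorem norm_sub_zero_le_sum {E : Type*} [SeminormedAddCommGroup E] {x : ℕ → E} {c : ℕ → ℝ}
    (h : ∀ k, 1 ≤ k → ‖x k - x (k - 1)‖ ≤ c k) (n : ℕ) :
    ‖x n - x 0‖ ≤ ∑ k ∈ Finset.Icc 1 n, c k := by
  induction n with
  | zero => simp
  | succ n ih =>
    have hstep : ‖x (n + 1) - x n‖ ≤ c (n + 1) := by simpa using h (n + 1) (by omega)
    rw [Finset.sum_Icc_succ_top (by omega)]
    linarith [norm_sub_le_norm_sub_add_norm_sub (x (n + 1)) (x n) (x 0)]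

namespace MeasureTheory

variable {Ω : Type*} {m m0 : MeasurableSpace Ω} {μ : Measure Ω}

theorem measureReal_le_two_mul_exp_mul_integral_cosh [IsFiniteMeasure μ] {R : Ω → ℝ} {L ε : ℝ}
    (hL : 0 ≤ L) (hε : 0 ≤ ε) (hR : Integrable (fun ω => cosh (L * R ω)) μ) :
    μ.real {ω | ε ≤ R ω} ≤ 2 * exp (-(L * ε)) * ∫ ω, cosh (L * R ω) ∂μ := by
  have hmarkov := mul_meas_ge_le_integral_of_nonneg
    (ae_of_all μ fun ω => (cosh_pos (L * R ω)).le) hR (cosh (L * ε))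
  have hsub : {ω | ε ≤ R ω} ⊆ {ω | cosh (L * ε) ≤ cosh (L * R ω)} := fun ω hω =>
    cosh_le_cosh.2 (abs_le_abs_of_nonneg (mul_nonneg hL hε) (mul_le_mul_of_nonneg_left hω hL))
  have hcosh : 1 ≤ 2 * exp (-(L * ε)) * cosh (L * ε) := by
    rw [cosh_eq, exp_neg]
    field_simp
    nlinarith [exp_pos (L * ε)]
  calc μ.real {ω | ε ≤ R ω} ≤ 2 * exp (-(L * ε)) * cosh (L * ε) * μ.real {ω | ε ≤ R ω} :=
        le_mul_of_one_le_left measureReal_nonneg hcosh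
    _ ≤ 2 * exp (-(L * ε)) * (cosh (L * ε) * μ.real {ω | cosh (L * ε) ≤ cosh (L * R ω)}) := by
        rw [mul_assoc]; gcongr; exact measure_ne_top μ _
    _ ≤ 2 * exp (-(L * ε)) * ∫ ω, cosh (L * R ω) ∂μ :=
        mul_le_mul_of_nonneg_left hmarkov (by positivity)

theorem integrable_cosh_mul_norm {E : Type*} [NormedAddCommGroup E] [IsFiniteMeasure μ]
    {Z : Ω → E} (hZ : AEStronglyMeasurable Z μ)
    {B : ℝ} (hZB : ∀ᵐ ω ∂μ, ‖Z ω‖ ≤ B) (L : ℝ) : Integrable (fun ω => cosh (L * ‖Z ω‖)) μ := by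
  refine Integrable.mono' (integrable_const (cosh (L * B))) (by fun_prop) ?_
  filter_upwards [hZB] with ω hω
  rw [Real.norm_of_nonneg (cosh_pos _).le, cosh_le_cosh, abs_mul, abs_mul, abs_norm]
  gcongr
  exact hω.trans (le_abs_self B)

variable {F : Type*} [NormedAddCommGroup F] [InnerProductSpace ℝ F] [CompleteSpace F]

theorem integral_inner_eq_zero_of_condExp_eq_zero (hm : m ≤ m0) [IsFiniteMeasure μ]
    {V ξ : Ω → F} (hV : StronglyMeasurable[m] V) {C : ℝ} (hVC : ∀ᵐ ω ∂μ, ‖V ω‖ ≤ C)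
    (hξ : Integrable ξ μ) (hξm : μ[ξ | m] =ᵐ[μ] 0) : ∫ ω, ⟪V ω, ξ ω⟫ ∂μ = 0 := by
  calc ∫ ω, ⟪V ω, ξ ω⟫ ∂μ = ∫ ω, (μ[fun ω => ⟪V ω, ξ ω⟫ | m]) ω ∂μ := (integral_condExp hm).symm
    _ = ∫ ω, ⟪V ω, (μ[ξ | m]) ω⟫ ∂μ :=
        integral_congr_ae (condExp_stronglyMeasurable_bilin_of_bound (innerSL ℝ) hm hV hξ C hVC)
    _ = 0 := by
        rw [integral_congr_ae (g := 0) (hξm.mono fun ω hω => by simp [hω])]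
        exact integral_zero Ω ℝ

theorem integral_cosh_mul_norm_add_le (hm : m ≤ m0) [IsFiniteMeasure μ] {Y ξ : Ω → F}
    {L B c : ℝ} (hL : 0 ≤ L) (hY : StronglyMeasurable[m] Y) (hYB : ∀ᵐ ω ∂μ, ‖Y ω‖ ≤ B)
    (hξ : Integrable ξ μ) (hξm : μ[ξ | m] =ᵐ[μ] 0) (hξc : ∀ᵐ ω ∂μ, ‖ξ ω‖ ≤ c) :
    ∫ ω, cosh (L * ‖Y ω + ξ ω‖) ∂μ ≤ cosh (L * c) * ∫ ω, cosh (L * ‖Y ω‖) ∂μ := by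
  set V := fun ω => coshCorrection L c (Y ω)
  have hV : StronglyMeasurable[m] V := hY.coshCorrection L c
  have hVC : ∀ᵐ ω ∂μ, ‖V ω‖ ≤ sinh (L * B) * |sinh (L * c) / c| :=
    hYB.mono fun ω hω => norm_coshCorrection_le hL c hω
  have hcoshY : Integrable (fun ω => cosh (L * ‖Y ω‖)) μ :=
    integrable_cosh_mul_norm (hY.mono hm).aestronglyMeasurable hYB L
  have hinner : Integrable (fun ω => ⟪V ω, ξ ω⟫) μ :=
    (innerSL ℝ).integrable_of_bilin_of_bdd_left _ (hV.mono hm).aestronglyMeasurable hVC hξ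
  calc ∫ ω, cosh (L * ‖Y ω + ξ ω‖) ∂μ
      ≤ ∫ ω, (cosh (L * ‖Y ω‖) * cosh (L * c) + ⟪V ω, ξ ω⟫) ∂μ :=
        integral_mono_of_nonneg (ae_of_all μ fun ω => (cosh_pos _).le)
          ((hcoshY.mul_const _).add hinner)
          (hξc.mono fun ω hω => cosh_mul_norm_add_le L (Y ω) hω)
    _ = cosh (L * c) * ∫ ω, cosh (L * ‖Y ω‖) ∂μ := by
        rw [integral_add (hcoshY.mul_const _) hinner, integral_mul_const,
          integral_inner_eq_zero_of_condExp_eq_zero hm hV hVC hξ hξm, add_zero, mul_comm]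

theorem ae_norm_sub_zero_le_sum {E : Type*} [NormedAddCommGroup E] {X : ℕ → Ω → E}
    {c : ℕ → ℝ} (hbd : ∀ k, 1 ≤ k → ∀ᵐ ω ∂μ, ‖X k ω - X (k - 1) ω‖ ≤ c k) (n : ℕ) :
    ∀ᵐ ω ∂μ, ‖X n ω - X 0 ω‖ ≤ ∑ k ∈ Finset.Icc 1 n, c k := by
  filter_upwards [ae_all_iff.2 fun k => Filter.eventually_imp_distrib_left.2 (hbd k)] with ω hω
  exact norm_sub_zero_le_sum hω n

theorem Martingale.condExp_sub_ae_eq_zero {ι : Type*} [Preorder ι] {X : ι → Ω → F}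
    {ℱ : Filtration ι m0} (hX : Martingale X ℱ μ) {i j : ι} (hij : i ≤ j) :
    μ[X j - X i | ℱ i] =ᵐ[μ] 0 := by
  filter_upwards [condExp_sub (hX.integrable j) (hX.integrable i) (ℱ i), hX.condExp_ae_eq hij,
    hX.condExp_ae_eq (le_refl i)] with ω h hj hi
  simp [h, hj, hi]

theorem Martingale.integral_cosh_mul_norm_sub_le_prod [IsProbabilityMeasure μ]
    {X : ℕ → Ω → F} {ℱ : Filtration ℕ m0} (hX : Martingale X ℱ μ) {c : ℕ → ℝ}
    (hbd : ∀ k, 1 ≤ k → ∀ᵐ ω ∂μ, ‖X k ω - X (k - 1) ω‖ ≤ c k) {L : ℝ} (hL : 0 ≤ L) (n : ℕ) :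
    ∫ ω, cosh (L * ‖X n ω - X 0 ω‖) ∂μ ≤ ∏ k ∈ Finset.Icc 1 n, cosh (L * c k) := by
  induction n with
  | zero => simp
  | succ n ih =>
    have hY : StronglyMeasurable[ℱ n] fun ω => X n ω - X 0 ω :=
      (hX.stronglyAdapted n).sub ((hX.stronglyAdapted 0).mono (ℱ.mono n.zero_le))
    have hξc : ∀ᵐ ω ∂μ, ‖X (n + 1) ω - X n ω‖ ≤ c (n + 1) := by
      simpa using hbd (n + 1) (by omega)
    have hstep := integral_cosh_mul_norm_add_le (ℱ.le n) hL hY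
      (ae_norm_sub_zero_le_sum hbd n) ((hX.integrable _).sub (hX.integrable _))
      (hX.condExp_sub_ae_eq_zero n.le_succ) hξc
    simp only [Pi.sub_apply, sub_add_sub_cancel'] at hstep
    rw [Finset.prod_Icc_succ_top (by omega), mul_comm]
    exact hstep.trans (by gcongr)

theorem Martingale.measureReal_norm_sub_ge_le [IsProbabilityMeasure μ]
    {X : ℕ → Ω → F} {ℱ : Filtration ℕ m0} (hX : Martingale X ℱ μ) {c : ℕ → ℝ}
    (hbd : ∀ k, 1 ≤ k → ∀ᵐ ω ∂μ, ‖X k ω - X (k - 1) ω‖ ≤ c k) {n : ℕ}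
    (hS : 0 < ∑ k ∈ Finset.Icc 1 n, c k ^ 2) {ε : ℝ} (hε : 0 ≤ ε) :
    μ.real {ω | ε ≤ ‖X n ω - X 0 ω‖} ≤
      2 * exp (-(ε ^ 2 / (2 * ∑ k ∈ Finset.Icc 1 n, c k ^ 2))) := by
  set S := ∑ k ∈ Finset.Icc 1 n, c k ^ 2
  set L := ε / S
  have hL : 0 ≤ L := div_nonneg hε hS.le
  have hint := integrable_cosh_mul_norm ((hX.integrable n).sub (hX.integrable 0)).1
    (ae_norm_sub_zero_le_sum hbd n) L
  have hmgf : ∫ ω, cosh (L * ‖X n ω - X 0 ω‖) ∂μ ≤ exp (L ^ 2 * S / 2) := by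
    refine (hX.integral_cosh_mul_norm_sub_le_prod hbd hL n).trans ?_
    refine (prod_cosh_le_exp _ _).trans_eq ?_
    simp only [S, mul_pow, ← Finset.mul_sum]
  calc μ.real {ω | ε ≤ ‖X n ω - X 0 ω‖}
      ≤ 2 * exp (-(L * ε)) * ∫ ω, cosh (L * ‖X n ω - X 0 ω‖) ∂μ :=
        measureReal_le_two_mul_exp_mul_integral_cosh hL hε hint
    _ ≤ 2 * exp (-(L * ε)) * exp (L ^ 2 * S / 2) := by gcongr
    _ = 2 * exp (-(ε ^ 2 / (2 * S))) := by
        rw [mul_assoc, ← exp_add]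
        congr 2
        simp only [L]
        field_simp
        ring

end MeasureTheory

/-- Azuma-type inequality for vector-valued martingales with bounded increments
`‖X_k - X_{k-1}‖ ≤ c_k` a.s.: for every `n ≥ 1` and `ε > 0`,
`Pr{‖Xₙ - X₀‖ ≥ ε} ≤ 2 exp (-2ε²/(5 ∑_{k=1}^n c_k²))`. -/
theorem statement17 {d : ℕ} {Ω : Type*} {m0 : MeasurableSpace Ω} (P : Measure Ω)
    [IsProbabilityMeasure P] (ℱ : Filtration ℕ m0)
    (X : ℕ → Ω → EuclideanSpace ℝ (Fin d)) (hX : Martingale X ℱ P)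
    (c : ℕ → ℝ) (hc : ∀ k : ℕ, 1 ≤ k → 0 < c k)
    (hbd : ∀ k : ℕ, 1 ≤ k → ∀ᵐ ω ∂P, ‖X k ω - X (k - 1) ω‖ ≤ c k)
    (n : ℕ) (hn : 1 ≤ n) (ε : ℝ) (hε : 0 < ε) :
    P {ω | ε ≤ ‖X n ω - X 0 ω‖} ≤
      ENNReal.ofReal
        (2 * Real.exp (-(2 * ε ^ 2) / (5 * ∑ k ∈ Finset.Icc 1 n, (c k) ^ 2))) := by
  set S := ∑ k ∈ Finset.Icc 1 n, c k ^ 2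
  have hS : 0 < S := Finset.sum_pos (fun k hk => pow_pos (hc k (Finset.mem_Icc.1 hk).1) 2)
    ⟨1, Finset.mem_Icc.2 ⟨le_rfl, hn⟩⟩
  rw [← ofReal_measureReal]
  refine ENNReal.ofReal_le_ofReal ((hX.measureReal_norm_sub_ge_le hbd hS hε.le).trans ?_)
  gcongr
  rw [neg_div, neg_le_neg_iff, div_le_div_iff₀ (by positivity) (by positivity)]
  nlinarith [sq_nonneg ε]
end

section
/- Let X = (x₁, …, x_d) be a zero-mean random vector in ℝ^d such that the components x₁, …, x_d are mutually independent, E[‖X‖²] ≤ σ², and Pr{|xᵢ| ≤ rᵢ} = 1 for i = 1, …, d, where each rᵢ > 0. Then for every ε > σ: Pr{ ‖X‖ ≥ ε } ≤ exp( −2(ε² − σ²)² / Σ_{i=1}^{d} rᵢ⁴ ). -/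
/-!
Each squared coordinate `xᵢ²` takes values in `[0, rᵢ²]`, so by Hoeffding's lemma its centred
version is sub-Gaussian with variance proxy `rᵢ⁴ / 4`. The squared coordinates are independent,
so `‖X‖² - E‖X‖² = ∑ᵢ (xᵢ² - E xᵢ²)` is sub-Gaussian with proxy `∑ rᵢ⁴ / 4`, and the Chernoff
bound gives `Pr{‖X‖² - E‖X‖² ≥ t} ≤ exp (-2t² / ∑ rᵢ⁴)`. Since `E‖X‖² ≤ σ²`, the event
`‖X‖ ≥ ε` forces `‖X‖² - E‖X‖² ≥ ε² - σ²`.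
-/

open MeasureTheory ProbabilityTheory
open scoped NNReal

namespace ProbabilityTheory

variable {Ω : Type*} [MeasurableSpace Ω] {P : Measure Ω}

lemma ae_sq_mem_Icc {Y : Ω → ℝ} {r : ℝ} (hbd : ∀ᵐ ω ∂P, |Y ω| ≤ r) :
    ∀ᵐ ω ∂P, Y ω ^ 2 ∈ Set.Icc 0 (r ^ 2) := by
  filter_upwards [hbd] with ω hω
  exact ⟨sq_nonneg _, sq_le_sq' (abs_le.mp hω).1 (abs_le.mp hω).2⟩

variable [IsProbabilityMeasure P]

lemma hasSubgaussianMGF_sq_sub_integral {Y : Ω → ℝ} (hY : AEMeasurable Y P) {r : ℝ}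
    (hbd : ∀ᵐ ω ∂P, |Y ω| ≤ r) :
    HasSubgaussianMGF (fun ω ↦ Y ω ^ 2 - ∫ ω, Y ω ^ 2 ∂P) ((‖r‖₊ ^ 2 / 2) ^ 2) P := by
  convert hasSubgaussianMGF_of_mem_Icc (hY.pow_const 2) (ae_sq_mem_Icc hbd) using 2
  ext
  simp

variable {ι : Type*} [Fintype ι]

lemma measureReal_sq_norm_sub_integral_ge_le {X : Ω → EuclideanSpace ℝ ι} (hX : Measurable X)
    (hindep : iIndepFun (fun i ω ↦ X ω i) P) {r : ι → ℝ} (hbd : ∀ i, ∀ᵐ ω ∂P, |X ω i| ≤ r i)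
    {t : ℝ} (ht : 0 ≤ t) :
    P.real {ω | t ≤ ‖X ω‖ ^ 2 - ∫ ω, ‖X ω‖ ^ 2 ∂P} ≤ Real.exp (-(2 * t ^ 2) / ∑ i, r i ^ 4) := by
  have hXi (i : ι) : AEMeasurable (fun ω ↦ X ω i) P := by fun_prop
  have hsq_indep : iIndepFun (fun i ω ↦ X ω i ^ 2 - ∫ ω, X ω i ^ 2 ∂P) P :=
    hindep.comp (fun i (x : ℝ) ↦ x ^ 2 - ∫ ω, X ω i ^ 2 ∂P) (fun _ ↦ by fun_prop)
  have hsq_int (i : ι) : Integrable (fun ω ↦ X ω i ^ 2) P :=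
    Integrable.of_mem_Icc 0 (r i ^ 2) (by fun_prop) (ae_sq_mem_Icc (hbd i))
  have hcentre (ω : Ω) : ‖X ω‖ ^ 2 - ∫ ω, ‖X ω‖ ^ 2 ∂P
      = ∑ i, (X ω i ^ 2 - ∫ ω, X ω i ^ 2 ∂P) := by
    simp only [EuclideanSpace.real_norm_sq_eq, Finset.sum_sub_distrib,
      integral_finsetSum _ fun i _ ↦ hsq_int i]
  have hproxy : 2 * ((∑ i, (‖r i‖₊ ^ 2 / 2) ^ 2 : ℝ≥0) : ℝ) = (∑ i, r i ^ 4) / 2 := by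
    push_cast
    simp only [Real.norm_eq_abs, sq_abs, Finset.mul_sum, Finset.sum_div]
    congr! 1 with i
    ring
  simp only [hcentre]
  calc _ ≤ _ := HasSubgaussianMGF.measure_sum_ge_le_of_iIndepFun hsq_indep (s := Finset.univ)
        (fun i _ ↦ hasSubgaussianMGF_sq_sub_integral (hXi i) (hbd i)) ht
    _ = _ := by rw [hproxy, div_div_eq_mul_div]; congr 1; ring

end ProbabilityTheory

theorem statement18_general {d : ℕ} {Ω : Type*} [MeasurableSpace Ω]
    (P : Measure Ω) [IsProbabilityMeasure P]
    (X : Ω → EuclideanSpace ℝ (Fin d)) (hXm : Measurable X)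
    (hindep : iIndepFun (fun i ω => X ω i) P)
    (σ : ℝ) (hσ : 0 ≤ σ) (hvar : (∫ ω, ‖X ω‖ ^ 2 ∂P) ≤ σ ^ 2)
    (r : Fin d → ℝ)
    (hbd : ∀ i, ∀ᵐ ω ∂P, |X ω i| ≤ r i)
    (ε : ℝ) (hε : σ < ε) :
    P {ω | ε ≤ ‖X ω‖} ≤
      ENNReal.ofReal (Real.exp (-(2 * (ε ^ 2 - σ ^ 2) ^ 2) / ∑ i, (r i) ^ 4)) := by
  have hdeviation : {ω | ε ≤ ‖X ω‖} ⊆ {ω | ε ^ 2 - σ ^ 2 ≤ ‖X ω‖ ^ 2 - ∫ ω, ‖X ω‖ ^ 2 ∂P} :=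
    fun ω (hω : ε ≤ ‖X ω‖) ↦ by
      have : ε ^ 2 ≤ ‖X ω‖ ^ 2 := pow_le_pow_left₀ (hσ.trans hε.le) hω 2
      simp only [Set.mem_ofPred_eq]
      linarith
  calc P {ω | ε ≤ ‖X ω‖}
      ≤ P {ω | ε ^ 2 - σ ^ 2 ≤ ‖X ω‖ ^ 2 - ∫ ω, ‖X ω‖ ^ 2 ∂P} := measure_mono hdeviation
    _ = ENNReal.ofReal (P.real {ω | ε ^ 2 - σ ^ 2 ≤ ‖X ω‖ ^ 2 - ∫ ω, ‖X ω‖ ^ 2 ∂P}) :=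
        (ofReal_measureReal).symm
    _ ≤ _ := ENNReal.ofReal_le_ofReal <| measureReal_sq_norm_sub_integral_ge_le hXm hindep hbd <|
        sub_nonneg.mpr (pow_le_pow_left₀ hσ hε.le 2)

/-- For a zero-mean random vector `X` in `ℝ^d` with mutually independent components,
`E[‖X‖²] ≤ σ²`, and `|xᵢ| ≤ rᵢ` almost surely, for every `ε > σ`:
`Pr{‖X‖ ≥ ε} ≤ exp (-2(ε² - σ²)²/∑ rᵢ⁴)`. -/
theorem statement18 {d : ℕ} {Ω : Type*} [MeasurableSpace Ω]
    (P : Measure Ω) [IsProbabilityMeasure P]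
    (X : Ω → EuclideanSpace ℝ (Fin d)) (hXm : Measurable X)
    (hindep : iIndepFun (fun i ω => X ω i) P)
    (hmean : (∫ ω, X ω ∂P) = 0)
    (σ : ℝ) (hσ : 0 ≤ σ) (hvar : (∫ ω, ‖X ω‖ ^ 2 ∂P) ≤ σ ^ 2)
    (r : Fin d → ℝ) (hr : ∀ i, 0 < r i)
    (hbd : ∀ i, ∀ᵐ ω ∂P, |X ω i| ≤ r i)
    (ε : ℝ) (hε : σ < ε) :
    P {ω | ε ≤ ‖X ω‖} ≤
      ENNReal.ofReal (Real.exp (-(2 * (ε ^ 2 - σ ^ 2) ^ 2) / ∑ i, (r i) ^ 4)) :=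
  statement18_general P X hXm hindep σ hσ hvar r hbd ε hε
end
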